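/- arXiv:2208.03598 — 2 statements merged into one kernel-verified Lean document; each statement's English description precedes it below -/
import Mathlib

section
/- Let 𝓗 be a finite-dimensional complex inner product space, A a self-adjoint operator on 𝓗, e ∈ 𝓗 a unit vector, and P the orthogonal projection onto the span of e. Let ρ : ℝ → [0,∞) be measurable and bounded with ρ = 0 outside [0,1]. Then for every z ∈ ℂ with Im z > 0 the operator A + s·P − z·Id is invertible for every s ∈ ℝ, and ∫_ℝ ρ(s) · Im ⟨e, (A + s·P − z·Id)⁻¹ e⟩ ds ≤ π · ‖ρ‖_∞, where ‖ρ‖_∞ = sup ρ. -/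
open scoped InnerProductSpace Pointwise
open MeasureTheory

noncomputable section

/-- The span of the eigenvectors of `A` with eigenvalue in `I ⊆ ℝ`. -/
def specSubmodule {H : Type*} [NormedAddCommGroup H] [InnerProductSpace ℂ H]
    (A : H →L[ℂ] H) (I : Set ℝ) : Submodule ℂ H :=
  ⨆ μ ∈ I, Module.End.eigenspace (A : H →ₗ[ℂ] H) (μ : ℂ)

/-- `tr χ_I(A)`: the number of eigenvalues of `A` in `I`, counted with multiplicity
(for a self-adjoint operator `A` on a finite-dimensional space). -/
def eigCount {H : Type*} [NormedAddCommGroup H] [InnerProductSpace ℂ H]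
    (A : H →L[ℂ] H) (I : Set ℝ) : ℕ :=
  Module.finrank ℂ (specSubmodule A I)

/-- The spectral projection `χ_I(A)` of `A` onto `I ⊆ ℝ`: the orthogonal projection onto
the span of the eigenvectors of `A` with eigenvalue in `I`. -/
def specProj {H : Type*} [NormedAddCommGroup H] [InnerProductSpace ℂ H]
    [FiniteDimensional ℂ H] (A : H →L[ℂ] H) (I : Set ℝ) : H →L[ℂ] H :=
  (specSubmodule A I).subtypeL ∘L Submodule.orthogonalProjectionOnto (specSubmodule A I)

/-- `μ ∈ ℝ` is an eigenvalue of `A`. -/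
def isEV {H : Type*} [NormedAddCommGroup H] [InnerProductSpace ℂ H]
    (A : H →L[ℂ] H) (μ : ℝ) : Prop :=
  Module.End.HasEigenvalue (A : H →ₗ[ℂ] H) (μ : ℂ)

/-- The multiplicity of `μ ∈ ℝ` as an eigenvalue of `A`. -/
def eigMult {H : Type*} [NormedAddCommGroup H] [InnerProductSpace ℂ H]
    (A : H →L[ℂ] H) (μ : ℝ) : ℕ :=
  Module.finrank ℂ (Module.End.eigenspace (A : H →ₗ[ℂ] H) (μ : ℂ))


lemma sa_isUnit {H : Type*} [NormedAddCommGroup H] [InnerProductSpace ℂ H]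
    [FiniteDimensional ℂ H] {T : H →L[ℂ] H} (hT : IsSelfAdjoint T) {z : ℂ} (hz : z.im ≠ 0) :
    IsUnit (T - z • (1 : H →L[ℂ] H)) := by
  have hmem : z ∉ spectrum ℂ T := fun h => hz (by rw [hT.mem_spectrum_eq_re h]; simp)
  have h1 : IsUnit (algebraMap ℂ (H →L[ℂ] H) z - T) := spectrum.notMem_iff.mp hmem
  have h2 : IsUnit (-(T - z • (1 : H →L[ℂ] H))) := by
    convert h1 using 1
    rw [Algebra.algebraMap_eq_smul_one, neg_sub]
  simpa using h2.neg

lemma inverse_apply_eq {H : Type*} [NormedAddCommGroup H] [InnerProductSpace ℂ H]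
    {B : H →L[ℂ] H} (hB : IsUnit B) {v w : H} (h : B v = w) :
    Ring.inverse B w = v := by
  rw [← h, ← ContinuousLinearMap.mul_apply, Ring.inverse_mul_cancel _ hB,
    ContinuousLinearMap.one_apply]

lemma poisson_integrable {b : ℝ} (hb : 0 < b) (a : ℝ) :
    Integrable (fun s : ℝ => b / ((s + a) ^ 2 + b ^ 2)) := by
  have key : ∀ s : ℝ, b / ((s + a) ^ 2 + b ^ 2) = b⁻¹ * (1 + ((s + a) / b) ^ 2)⁻¹ := by
    intro s
    have h1 : (0:ℝ) < (s + a) ^ 2 + b ^ 2 := by positivity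
    field_simp
    ring
  simp_rw [key]
  exact ((integrable_inv_one_add_sq.comp_div hb.ne').comp_add_right a).const_mul _

lemma poisson_integral {b : ℝ} (hb : 0 < b) (a : ℝ) :
    ∫ s : ℝ, b / ((s + a) ^ 2 + b ^ 2) = Real.pi := by
  have key : ∀ s : ℝ, b / ((s + a) ^ 2 + b ^ 2) = b⁻¹ * (1 + ((s + a) / b) ^ 2)⁻¹ := by
    intro s
    have h1 : (0:ℝ) < (s + a) ^ 2 + b ^ 2 := by positivity
    field_simp
    ring
  simp_rw [key]
  rw [MeasureTheory.integral_const_mul]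
  have h2 : ∫ s : ℝ, (1 + ((s + a) / b) ^ 2)⁻¹ = ∫ s : ℝ, (1 + (s / b) ^ 2)⁻¹ :=
    MeasureTheory.integral_add_right_eq_self (fun x : ℝ => (1 + (x / b) ^ 2)⁻¹) a
  rw [h2, MeasureTheory.Measure.integral_comp_div (fun x : ℝ => (1 + x ^ 2)⁻¹) b,
    integral_univ_inv_one_add_sq, smul_eq_mul, abs_of_pos hb]
  field_simp

/-- **Rank-one spectral averaging (resolvent form).**
For a self-adjoint `A` on a finite-dimensional complex inner product space, a unit vector `e`,
the rank-one projection `P = |e⟩⟨e|`, a bounded measurable density `ρ ≥ 0` vanishing outside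
`[0,1]`, and `z` in the upper half plane: `A + s·P − z` is invertible for all `s ∈ ℝ` and
`∫ ρ(s) · Im ⟨e, (A + s·P − z)⁻¹ e⟩ ds ≤ π · ‖ρ‖_∞`. -/
theorem rank_one_spectral_averaging_resolvent
    {H : Type*} [NormedAddCommGroup H] [InnerProductSpace ℂ H] [FiniteDimensional ℂ H]
    (A : H →L[ℂ] H) (hA : IsSelfAdjoint A)
    (e : H) (he : ‖e‖ = 1)
    (P : H →L[ℂ] H) (hP : ∀ x, P x = ⟪e, x⟫_ℂ • e)
    (ρ : ℝ → ℝ) (hρmeas : Measurable ρ) (hρnn : ∀ x, 0 ≤ ρ x)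
    (hρbdd : BddAbove (Set.range ρ)) (hρsupp : ∀ x ∉ Set.Icc (0:ℝ) 1, ρ x = 0)
    (z : ℂ) (hz : 0 < z.im) :
    (∀ s : ℝ, IsUnit (A + (s:ℂ) • P - z • (1 : H →L[ℂ] H))) ∧
    ∫ s : ℝ, ρ s * (⟪e, (Ring.inverse (A + (s:ℂ) • P - z • (1 : H →L[ℂ] H))) e⟫_ℂ).im
      ≤ Real.pi * ⨆ x, ρ x := by
  have hPsa : IsSelfAdjoint P := by
    rw [ContinuousLinearMap.isSelfAdjoint_iff_isSymmetric]
    intro x y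
    simp only [ContinuousLinearMap.coe_coe, hP, inner_smul_left, inner_smul_right,
      inner_conj_symm]
    ring
  have hTsa : ∀ s : ℝ, IsSelfAdjoint (A + (s:ℂ) • P) := by
    intro s
    refine hA.add ?_
    rw [IsSelfAdjoint, star_smul, Complex.star_def, Complex.conj_ofReal, hPsa.star_eq]
  have hUnit : ∀ s : ℝ, IsUnit (A + (s:ℂ) • P - z • (1 : H →L[ℂ] H)) :=
    fun s => sa_isUnit (hTsa s) hz.ne'
  refine ⟨hUnit, ?_⟩
  have hA0 : IsUnit (A - z • (1 : H →L[ℂ] H)) := sa_isUnit hA hz.ne'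
  set u : H := Ring.inverse (A - z • (1 : H →L[ℂ] H)) e with hu
  have hAu : (A - z • (1 : H →L[ℂ] H)) u = e := by
    rw [hu, ← ContinuousLinearMap.mul_apply, Ring.mul_inverse_cancel _ hA0,
      ContinuousLinearMap.one_apply]
  have hAu' : A u - z • u = e := by
    simpa [ContinuousLinearMap.sub_apply, ContinuousLinearMap.smul_apply,
      ContinuousLinearMap.one_apply] using hAu
  have hune : u ≠ 0 := by
    intro h
    rw [h, map_zero] at hAu
    rw [← hAu] at he
    simp at he
  set G : ℂ := ⟪e, u⟫_ℂ with hG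
  have h1 : G = ⟪A u, u⟫_ℂ - (starRingEnd ℂ) z * ((‖u‖ : ℂ) ^ 2) := by
    rw [hG, ← hAu, ContinuousLinearMap.sub_apply, ContinuousLinearMap.smul_apply,
      ContinuousLinearMap.one_apply, inner_sub_left, inner_smul_left,
      inner_self_eq_norm_sq_to_K]
    norm_num
  have h2 : (⟪A u, u⟫_ℂ).im = 0 := by
    have hsym := ContinuousLinearMap.isSelfAdjoint_iff_isSymmetric.mp hA u u
    have : (starRingEnd ℂ) ⟪A u, u⟫_ℂ = ⟪A u, u⟫_ℂ := by
      rw [inner_conj_symm]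
      exact hsym.symm
    exact (Complex.conj_eq_iff_im.mp this)
  have hGim : G.im = z.im * ‖u‖^2 := by
    rw [h1]
    simp [Complex.sub_im, Complex.mul_im, Complex.conj_re, Complex.conj_im, h2,
      ← Complex.ofReal_pow]
  have hGim_pos : 0 < G.im := by
    rw [hGim]
    exact mul_pos hz (pow_pos (norm_pos_iff.mpr hune) 2)
  have hGne : G ≠ 0 := fun h => by simp [h] at hGim_pos
  set w : ℂ := G⁻¹ with hw
  have hwim : w.im < 0 := by
    rw [hw, Complex.inv_im]
    exact div_neg_of_neg_of_pos (by linarith) (Complex.normSq_pos.mpr hGne)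
  set b : ℝ := -w.im with hb
  set a : ℝ := w.re with ha
  have hbpos : 0 < b := by simpa [hb] using hwim
  -- key resolvent formula
  have key : ∀ s : ℝ,
      (⟪e, (Ring.inverse (A + (s:ℂ) • P - z • (1 : H →L[ℂ] H))) e⟫_ℂ).im
        = b / ((s + a) ^ 2 + b ^ 2) := by
    intro s
    have hc : (1 + (s:ℂ) * G) ≠ 0 := by
      rcases eq_or_ne s 0 with rfl | hs
      · simp
      intro h
      have him : ((1:ℂ) + (s:ℂ) * G).im = s * G.im := by simp
      rw [h] at him
      simp only [Complex.zero_im] at him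
      exact (mul_ne_zero (by exact_mod_cast hs) hGim_pos.ne') him.symm
    have happ : (A + (s:ℂ) • P - z • (1 : H →L[ℂ] H)) ((1 + (s:ℂ) * G)⁻¹ • u) = e := by
      simp only [ContinuousLinearMap.sub_apply, ContinuousLinearMap.add_apply,
        ContinuousLinearMap.smul_apply, ContinuousLinearMap.one_apply,
        ContinuousLinearMap.map_smul, hP, inner_smul_right, ← hG]
      have expand : (1 + (s:ℂ) * G)⁻¹ • A u + (s:ℂ) • (((1 + (s:ℂ) * G)⁻¹ * G) • e)
            - z • (1 + (s:ℂ) * G)⁻¹ • u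
          = (1 + (s:ℂ) * G)⁻¹ • (A u - z • u) + ((s:ℂ) * (1 + (s:ℂ) * G)⁻¹ * G) • e := by
        module
      rw [expand, hAu', ← add_smul]
      have hcoef : (1 + (s:ℂ) * G)⁻¹ + (s:ℂ) * (1 + (s:ℂ) * G)⁻¹ * G = 1 := by
        field_simp [hc]
      rw [hcoef, one_smul]
    have hinv := inverse_apply_eq (hUnit s) happ
    rw [hinv, inner_smul_right, ← hG]
    have hval : (1 + (s:ℂ) * G)⁻¹ * G = ((s:ℂ) + w)⁻¹ := by
      rw [hw]
      have h3 : (s:ℂ) + G⁻¹ = (1 + (s:ℂ) * G) * G⁻¹ := by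
        field_simp [hGne]
        ring
      rw [h3, mul_inv_rev, inv_inv, mul_comm]
    rw [hval, Complex.inv_im]
    have hre : ((s:ℂ) + w).re = s + a := by simp [ha]
    have him : ((s:ℂ) + w).im = -b := by simp [hb]
    rw [Complex.normSq_apply, hre, him]
    rw [hb]
    ring_nf
  simp_rw [key]
  -- the integral estimate
  set C : ℝ := ⨆ x, ρ x with hC
  have hρleC : ∀ s, ρ s ≤ C := fun s => le_ciSup hρbdd s
  have hCnn : 0 ≤ C := le_trans (hρnn 0) (hρleC 0)
  have hφpos : ∀ s : ℝ, 0 < b / ((s + a) ^ 2 + b ^ 2) :=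
    fun s => div_pos hbpos (by positivity)
  have hφcont : Continuous fun s : ℝ => b / ((s + a) ^ 2 + b ^ 2) :=
    Continuous.div continuous_const
      (((continuous_id.add continuous_const).pow 2).add continuous_const)
      (fun s => by positivity)
  have hbound : ∀ s : ℝ, ρ s * (b / ((s + a) ^ 2 + b ^ 2))
      ≤ C * (b / ((s + a) ^ 2 + b ^ 2)) :=
    fun s => mul_le_mul_of_nonneg_right (hρleC s) (hφpos s).le
  have hgint : Integrable (fun s : ℝ => C * (b / ((s + a) ^ 2 + b ^ 2))) :=
    (poisson_integrable hbpos a).const_mul C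
  have hfint : Integrable (fun s : ℝ => ρ s * (b / ((s + a) ^ 2 + b ^ 2))) := by
    refine hgint.mono' ((hρmeas.mul hφcont.measurable).aestronglyMeasurable) ?_
    refine Filter.Eventually.of_forall (fun s => ?_)
    rw [Real.norm_eq_abs, abs_of_nonneg (mul_nonneg (hρnn s) (hφpos s).le)]
    exact hbound s
  calc ∫ s : ℝ, ρ s * (b / ((s + a) ^ 2 + b ^ 2))
      ≤ ∫ s : ℝ, C * (b / ((s + a) ^ 2 + b ^ 2)) :=
        integral_mono hfint hgint hbound
    _ = C * Real.pi := by rw [MeasureTheory.integral_const_mul, poisson_integral hbpos a]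
    _ = Real.pi * C := mul_comm _ _
end
end

section
/- Let 𝓗 be a finite-dimensional complex inner product space, A a self-adjoint operator on 𝓗, P an orthogonal projection on 𝓗, λ ∈ ℂ with Im λ > 0, and z ∈ ℂ with Im z < 0. Then A + λ·P − z·Id is invertible, and setting K = P (A + λ·P − z·Id)⁻¹ P and Im K := (K − K*)/(2i): (i) −Im K ≥ (Im λ − Im z) · K* K ≥ (Im λ) · K* K as self-adjoint operators; (ii) ‖K‖ ≤ min( 1/(Im λ), 1/|Im z| ). -/
open scoped InnerProductSpace Pointwise
open MeasureTheory

noncomputable section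

open ContinuousLinearMap in
theorem aux_pos' {H : Type*} [NormedAddCommGroup H] [InnerProductSpace ℂ H]
    [FiniteDimensional ℂ H]
    (c : ℝ) (hc : 0 ≤ c) (B C : H →L[ℂ] H) (h : ∀ x, ‖C x‖ ≤ ‖B x‖) :
    (((c : ℂ)) • (adjoint B * B - adjoint C * C)).IsPositive := by
  constructor
  · have hB : IsSelfAdjoint (adjoint B * B) := by
      rw [IsSelfAdjoint, star_mul, star_eq_adjoint, star_eq_adjoint, adjoint_adjoint]
    have hC : IsSelfAdjoint (adjoint C * C) := by
      rw [IsSelfAdjoint, star_mul, star_eq_adjoint, star_eq_adjoint, adjoint_adjoint]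
    rw [← ContinuousLinearMap.isSelfAdjoint_iff_isSymmetric]
    rw [IsSelfAdjoint, star_smul, star_sub, hB.star_eq, hC.star_eq, Complex.star_def,
      Complex.conj_ofReal]
  · intro x
    rw [ContinuousLinearMap.reApplyInnerSelf_apply]
    simp only [smul_apply, sub_apply, ContinuousLinearMap.mul_apply, inner_smul_left, inner_sub_left,
      adjoint_inner_left]
    rw [inner_self_eq_norm_sq_to_K, inner_self_eq_norm_sq_to_K, Complex.conj_ofReal]
    simp only [← RCLike.ofReal_pow, ← RCLike.ofReal_sub, ← RCLike.ofReal_mul, RCLike.mul_re,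
      RCLike.ofReal_re, RCLike.ofReal_im, RCLike.re_to_complex, RCLike.im_to_complex,
      Complex.ofReal_re, Complex.ofReal_im]
    have h1 := h x
    have h2 : (0:ℝ) ≤ ‖C x‖ := norm_nonneg _
    have h3 : ‖C x‖^2 ≤ ‖B x‖^2 := by nlinarith
    nlinarith [mul_nonneg hc (sub_nonneg.mpr h3)]

theorem aux_im' {H : Type*} [NormedAddCommGroup H] [InnerProductSpace ℂ H]
    [FiniteDimensional ℂ H]
    (A P : H →L[ℂ] H) (hA : IsSelfAdjoint A)
    (hP : IsSelfAdjoint P) (hP2 : P * P = P) (lam z : ℂ) (y : H) :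
    (inner ℂ y ((A + lam • P - z • (1 : H →L[ℂ] H)) y) : ℂ).im
      = lam.im * ‖P y‖^2 - z.im * ‖y‖^2 := by
  have hAsym := (ContinuousLinearMap.isSelfAdjoint_iff_isSymmetric.mp hA)
  have hPsym := (ContinuousLinearMap.isSelfAdjoint_iff_isSymmetric.mp hP)
  have hA0 : (inner ℂ y (A y) : ℂ).im = 0 := by
    have h1 : (starRingEnd ℂ) (inner ℂ y (A y) : ℂ) = inner ℂ y (A y) := by
      rw [inner_conj_symm]; exact hAsym y y
    rw [Complex.conj_eq_iff_im] at h1; exact h1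
  have hPy : (inner ℂ y (P y) : ℂ) = ((‖P y‖^2 : ℝ) : ℂ) := by
    have h2 : P (P y) = P y := by
      have := congrArg (fun f : H →L[ℂ] H => f y) hP2; simpa using this
    calc (inner ℂ y (P y) : ℂ) = inner ℂ y (P (P y)) := by rw [h2]
    _ = inner ℂ (P y) (P y) := (hPsym y (P y)).symm
    _ = ((‖P y‖^2 : ℝ) : ℂ) := by rw [inner_self_eq_norm_sq_to_K]; norm_cast
  have hyy : (inner ℂ y y : ℂ) = ((‖y‖^2 : ℝ) : ℂ) := by
    rw [inner_self_eq_norm_sq_to_K]; norm_cast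
  simp only [ContinuousLinearMap.add_apply, ContinuousLinearMap.sub_apply,
    ContinuousLinearMap.smul_apply, ContinuousLinearMap.one_apply,
    inner_add_right, inner_sub_right, inner_smul_right, hPy, hyy]
  simp only [Complex.add_im, Complex.sub_im, Complex.mul_im, hA0, ← Complex.ofReal_pow,
    Complex.ofReal_im, Complex.ofReal_re]
  ring

theorem aux_unit' {H : Type*} [NormedAddCommGroup H] [InnerProductSpace ℂ H]
    [FiniteDimensional ℂ H] (T : H →L[ℂ] H) (hinj : Function.Injective T) : IsUnit T := by
  have hbij : Function.Bijective (T : H →ₗ[ℂ] H) :=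
    ⟨hinj, LinearMap.injective_iff_surjective.mp hinj⟩
  let e := LinearEquiv.ofBijective (T : H →ₗ[ℂ] H) hbij
  let g : H →L[ℂ] H := LinearMap.toContinuousLinearMap (e.symm : H →ₗ[ℂ] H)
  refine isUnit_iff_exists.mpr ⟨g, ?_, ?_⟩
  · ext x
    have : T (e.symm x) = x := e.apply_symm_apply x
    simpa [g] using this
  · ext x
    have : e.symm (T x) = x := e.symm_apply_apply x
    simpa [g] using this

set_option maxHeartbeats 2000000 in
/-- **Key operator inequality for rank-m spectral averaging.**
For self-adjoint `A`, an orthogonal projection `P`, `Im λ > 0` and `Im z < 0`, the operator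
`A + λP − z` is invertible and, with `K = P (A + λP − z)⁻¹ P` and `Im K = (K − K*)/(2i)`:
(i) `−Im K ≥ (Im λ − Im z)·K*K ≥ (Im λ)·K*K` (Loewner order);
(ii) `‖K‖ ≤ min(1/Im λ, 1/|Im z|)`. -/
theorem key_operator_inequality
    {H : Type*} [NormedAddCommGroup H] [InnerProductSpace ℂ H] [FiniteDimensional ℂ H]
    (A P : H →L[ℂ] H) (hA : IsSelfAdjoint A)
    (hP : IsSelfAdjoint P) (hP2 : P * P = P)
    (lam z : ℂ) (hlam : 0 < lam.im) (hz : z.im < 0) :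
    IsUnit (A + lam • P - z • (1 : H →L[ℂ] H)) ∧
    ∀ K : H →L[ℂ] H, K = P * Ring.inverse (A + lam • P - z • (1 : H →L[ℂ] H)) * P →
      (((Complex.I / 2) • (K - ContinuousLinearMap.adjoint K)
          - ((lam.im - z.im : ℝ) : ℂ) • (ContinuousLinearMap.adjoint K * K)).IsPositive ∧
       (((lam.im - z.im : ℝ) : ℂ) • (ContinuousLinearMap.adjoint K * K)
          - ((lam.im : ℝ) : ℂ) • (ContinuousLinearMap.adjoint K * K)).IsPositive) ∧
      ‖K‖ ≤ min (1 / lam.im) (1 / |z.im|) := by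
  have hPsym := (ContinuousLinearMap.isSelfAdjoint_iff_isSymmetric.mp hP)
  set T : H →L[ℂ] H := A + lam • P - z • (1 : H →L[ℂ] H) with hT
  -- injectivity
  have h0 : ∀ x : H, T x = 0 → x = 0 := by
    intro x hx
    have h1 := aux_im' A P hA hP hP2 lam z x
    rw [← hT, hx, inner_zero_right] at h1
    simp only [Complex.zero_im] at h1
    have hx2 : ‖x‖^2 ≤ 0 := by nlinarith [sq_nonneg ‖P x‖, sq_nonneg ‖x‖]
    have hx3 : ‖x‖^2 = 0 := le_antisymm hx2 (sq_nonneg _)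
    have : ‖x‖ = 0 := by nlinarith [norm_nonneg x]
    exact norm_eq_zero.mp this
  have hinj : Function.Injective T := by
    intro a b hab
    have : T (a - b) = 0 := by rw [map_sub, hab, sub_self]
    have := h0 _ this
    exact sub_eq_zero.mp this
  have hu : IsUnit T := aux_unit' T hinj
  refine ⟨hu, ?_⟩
  intro K hK
  set R : H →L[ℂ] H := Ring.inverse T with hR
  have hTR : T * R = 1 := Ring.mul_inverse_cancel T hu
  have hRT : R * T = 1 := Ring.inverse_mul_cancel T hu
  set S : H →L[ℂ] H := star R with hS
  have hST : S * star T = 1 := by rw [hS, ← star_mul, hTR, star_one]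
  have hTS : star T * S = 1 := by rw [hS, ← star_mul, hRT, star_one]
  have hstarT : star T = A + (starRingEnd ℂ lam) • P - (starRingEnd ℂ z) • (1 : H →L[ℂ] H) := by
    rw [hT]
    simp only [star_sub, star_add, star_smul, hA.star_eq, hP.star_eq, star_one, Complex.star_def]
  have hTT : star T - T = (starRingEnd ℂ lam - lam) • P
      - (starRingEnd ℂ z - z) • (1 : H →L[ℂ] H) := by
    rw [hstarT, hT]; module
  have hdiff : R - S = S * (star T - T) * R := by
    have h1 : S * (star T - T) * R = (S * star T) * R - S * (T * R) := by noncomm_ring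
    rw [h1, hST, hTR, one_mul, mul_one]
  have hKstar : star K = P * S * P := by
    rw [hK]
    simp only [star_mul, hP.star_eq, ← hS, mul_assoc]
  set M : H →L[ℂ] H := R * P with hM
  have hMstar : star M = P * S := by rw [hM, star_mul, hP.star_eq, ← hS]
  have hX : star K * K = P * (S * (P * (R * P))) := by
    rw [hKstar, hK]
    have h1 : P * S * P * (P * R * P) = P * (S * ((P * P) * (R * P))) := by noncomm_ring
    rw [h1, hP2]
  have hY : star M * M = P * (S * (R * P)) := by rw [hMstar, hM, mul_assoc]
  have hc1 : Complex.I / 2 * (starRingEnd ℂ lam - lam) = ((lam.im : ℝ) : ℂ) := by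
    rw [show starRingEnd ℂ lam - lam = -(lam - starRingEnd ℂ lam) from by ring, Complex.sub_conj]
    have h := Complex.I_sq
    push_cast
    linear_combination (-(lam.im : ℂ)) * h
  have hc2 : Complex.I / 2 * (starRingEnd ℂ z - z) = ((z.im : ℝ) : ℂ) := by
    rw [show starRingEnd ℂ z - z = -(z - starRingEnd ℂ z) from by ring, Complex.sub_conj]
    have h := Complex.I_sq
    push_cast
    linear_combination (-(z.im : ℂ)) * h
  have hmain : (Complex.I / 2) • (K - star K)
      = ((lam.im : ℝ) : ℂ) • (star K * K) + ((-z.im : ℝ) : ℂ) • (star M * M) := by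
    have h1 : K - star K = P * (S * (star T - T) * R) * P := by
      rw [hKstar, hK]
      have h2 : P * R * P - P * S * P = P * (R - S) * P := by noncomm_ring
      rw [h2, hdiff]
    rw [h1, hTT]
    have h3 : P * (S * ((starRingEnd ℂ lam - lam) • P
          - (starRingEnd ℂ z - z) • (1 : H →L[ℂ] H)) * R) * P
        = (starRingEnd ℂ lam - lam) • (P * (S * (P * (R * P))))
          - (starRingEnd ℂ z - z) • (P * (S * (R * P))) := by
      simp only [mul_sub, sub_mul, mul_one, one_mul, smul_mul_assoc, mul_smul_comm, mul_assoc]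
    rw [h3, ← hX, ← hY, smul_sub, smul_smul, smul_smul, hc1, hc2]
    push_cast
    module
  have hKM : ∀ x : H, K x = P (M x) := by
    intro x
    rw [hK, hM]
    simp only [ContinuousLinearMap.mul_apply]
  have hPle : ∀ y : H, ‖P y‖ ≤ ‖y‖ := by
    intro y
    have h2 : P (P y) = P y := by
      have := congrArg (fun f : H →L[ℂ] H => f y) hP2; simpa using this
    have h3 : (‖P y‖ : ℝ)^2 = RCLike.re (inner ℂ y (P y) : ℂ) := by
      rw [← inner_self_eq_norm_sq (𝕜 := ℂ) (P y)]
      congr 1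
      calc (inner ℂ (P y) (P y) : ℂ) = inner ℂ y (P (P y)) := hPsym y (P y)
      _ = inner ℂ y (P y) := by rw [h2]
    have h4 : |RCLike.re (inner ℂ y (P y) : ℂ)| ≤ ‖y‖ * ‖P y‖ :=
      le_trans (RCLike.abs_re_le_norm _) (norm_inner_le_norm _ _)
    have h5 : (0:ℝ) ≤ ‖P y‖ := norm_nonneg _
    nlinarith [le_abs_self (RCLike.re (inner ℂ y (P y) : ℂ)), norm_nonneg y,
      sq_nonneg (‖P y‖ - ‖y‖)]
  have hkey : ∀ x : H, lam.im * ‖P (M x)‖^2 - z.im * ‖M x‖^2 ≤ ‖P (M x)‖ * ‖x‖ := by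
    intro x
    have hTy : T (M x) = P x := by
      have h1 : (T * R) (P x) = (1 : H →L[ℂ] H) (P x) := by rw [hTR]
      simpa [hM, ContinuousLinearMap.mul_apply] using h1
    have h1 := aux_im' A P hA hP hP2 lam z (M x)
    rw [← hT, hTy] at h1
    have h2 : (inner ℂ (M x) (P x) : ℂ) = inner ℂ (P (M x)) x := (hPsym (M x) x).symm
    rw [h2] at h1
    have h3 : |(inner ℂ (P (M x)) x : ℂ).im| ≤ ‖P (M x)‖ * ‖x‖ := by
      refine le_trans (Complex.abs_im_le_norm _) ?_
      exact norm_inner_le_norm _ _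
    calc lam.im * ‖P (M x)‖^2 - z.im * ‖M x‖^2 = (inner ℂ (P (M x)) x : ℂ).im := h1.symm
    _ ≤ |(inner ℂ (P (M x)) x : ℂ).im| := le_abs_self _
    _ ≤ ‖P (M x)‖ * ‖x‖ := h3
  clear_value M S R T
  refine ⟨⟨?_, ?_⟩, ?_⟩
  · have hEq : (Complex.I / 2) • (K - ContinuousLinearMap.adjoint K)
        - ((lam.im - z.im : ℝ) : ℂ) • (ContinuousLinearMap.adjoint K * K)
        = ((-z.im : ℝ) : ℂ) • (ContinuousLinearMap.adjoint M * M
            - ContinuousLinearMap.adjoint K * K) := by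
      rw [← ContinuousLinearMap.star_eq_adjoint K, ← ContinuousLinearMap.star_eq_adjoint M,
        hmain]
      push_cast
      module
    rw [hEq]
    exact aux_pos' (-z.im) (by linarith) M K (fun x => by rw [hKM x]; exact hPle (M x))
  · have hEq2 : ((lam.im - z.im : ℝ) : ℂ) • (ContinuousLinearMap.adjoint K * K)
        - ((lam.im : ℝ) : ℂ) • (ContinuousLinearMap.adjoint K * K)
        = ((-z.im : ℝ) : ℂ) • (ContinuousLinearMap.adjoint K * K
            - ContinuousLinearMap.adjoint (0 : H →L[ℂ] H) * (0 : H →L[ℂ] H)) := by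
      have h0' : ContinuousLinearMap.adjoint (0 : H →L[ℂ] H) * (0 : H →L[ℂ] H) = 0 := by
        simp
      rw [h0', sub_zero]
      push_cast
      module
    rw [hEq2]
    exact aux_pos' (-z.im) (by linarith) K 0 (fun x => by simp)
  · refine le_min ?_ ?_
    · refine ContinuousLinearMap.opNorm_le_bound K (one_div_nonneg.mpr hlam.le) ?_
      intro x
      rw [hKM x]
      by_cases hp : ‖P (M x)‖ = 0
      · have hr : (0:ℝ) ≤ 1 / lam.im * ‖x‖ :=
          mul_nonneg (one_div_nonneg.mpr hlam.le) (norm_nonneg x)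
        rw [hp]; exact hr
      · have hp' : 0 < ‖P (M x)‖ := lt_of_le_of_ne (norm_nonneg _) (Ne.symm hp)
        have hzm : z.im * ‖M x‖^2 ≤ 0 :=
          mul_nonpos_of_nonpos_of_nonneg hz.le (sq_nonneg _)
        have h6 : lam.im * ‖P (M x)‖^2 ≤ ‖P (M x)‖ * ‖x‖ := by
          have := hkey x; linarith
        have h7 : lam.im * ‖P (M x)‖ ≤ ‖x‖ := by
          refine le_of_mul_le_mul_right ?_ hp'
          nlinarith
        rw [one_div, ← div_eq_inv_mul, le_div_iff₀ hlam, mul_comm]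
        exact h7
    · refine ContinuousLinearMap.opNorm_le_bound K (one_div_nonneg.mpr (abs_nonneg _)) ?_
      intro x
      rw [hKM x]
      have habs : |z.im| = -z.im := abs_of_neg hz
      by_cases hm : ‖M x‖ = 0
      · have hr : (0:ℝ) ≤ 1 / |z.im| * ‖x‖ :=
          mul_nonneg (one_div_nonneg.mpr (abs_nonneg _)) (norm_nonneg x)
        have := hPle (M x)
        rw [hm] at this
        have hzero : ‖P (M x)‖ = 0 := le_antisymm this (norm_nonneg _)
        rw [hzero]; exact hr
      · have hm' : 0 < ‖M x‖ := lt_of_le_of_ne (norm_nonneg _) (Ne.symm hm)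
        have h8 : -z.im * ‖M x‖^2 ≤ ‖M x‖ * ‖x‖ := by
          have h8a := hkey x
          have h8b := mul_le_mul_of_nonneg_right (hPle (M x)) (norm_nonneg x)
          nlinarith [mul_nonneg hlam.le (sq_nonneg ‖P (M x)‖)]
        have h9 : -z.im * ‖M x‖ ≤ ‖x‖ := by
          refine le_of_mul_le_mul_right ?_ hm'
          nlinarith
        have hzpos : (0:ℝ) < -z.im := by linarith
        rw [habs, one_div, ← div_eq_inv_mul, le_div_iff₀ hzpos]
        nlinarith [mul_le_mul_of_nonneg_right (hPle (M x)) hzpos.le]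
end
end
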